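/- Let a, b ∈ ℂ be such that {a^k b^l : k, l ∈ ℕ} is dense in ℂ. Let n ≥ 2 and let A = diag(a_1, …, a_n), B = diag(b_1, …, b_n) be the diagonal n×n complex matrices with a_1 = a, b_1 = b and a_j, b_j ∈ ℂ satisfying |a_j| > 1 and |b_j| > 1 for j = 2, …, n. Then: (i) the set {z ∈ ℂ^n : J_{(A,B)}(z) = ℂ^n} equals {(z_1, 0, …, 0)ᵗ : z_1 ∈ ℂ}; in particular the pair (A,B) is locally hypercyclic; and (ii) the pair (A,B) is not hypercyclic, i.e. no vector w ∈ ℂ^n has {A^k B^l w : k, l ∈ ℕ∪{0}} dense in ℂ^n. -/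

import Mathlib

open Filter Topology

/-- The extended limit set `J_{(A,B)}(z)` of a pair of `n × n` complex matrices acting on
`ℂⁿ`: the set of `w` such that there exist a sequence `zₘ → z` and sequences of
non-negative integers `kₘ, lₘ` with `kₘ + lₘ → ∞` and `A^{kₘ} B^{lₘ} zₘ → w`. -/
def JSetPair {n : ℕ} (A B : Matrix (Fin n) (Fin n) ℂ) (z : Fin n → ℂ) :
    Set (Fin n → ℂ) :=
  {w | ∃ (u : ℕ → Fin n → ℂ) (k l : ℕ → ℕ),
    Tendsto u atTop (𝓝 z) ∧
    Tendsto (fun m => k m + l m) atTop atTop ∧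
    Tendsto (fun m => (A ^ k m * B ^ l m).mulVec (u m)) atTop (𝓝 w)}

/-- Tail density: products `a^k b^l` with `k + l` arbitrarily large approximate any point. -/
private lemma tailDense (a b : ℂ)
    (hab : Dense {w : ℂ | ∃ k l : ℕ, 0 < k ∧ 0 < l ∧ a ^ k * b ^ l = w})
    (N : ℕ) (t : ℂ) {ε : ℝ} (hε : 0 < ε) :
    ∃ k l : ℕ, N ≤ k + l ∧ ‖a ^ k * b ^ l - t‖ < ε := by
  have hFfin : ((fun p : ℕ × ℕ => a ^ p.1 * b ^ p.2) '' {p | p.1 + p.2 < N}).Finite := by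
    apply Set.Finite.image
    apply Set.Finite.subset ((Set.finite_Iio N).prod (Set.finite_Iio N))
    rintro ⟨k, l⟩ h
    simp only [Set.mem_setOf_eq] at h
    exact ⟨by simp only [Set.mem_Iio]; omega, by simp only [Set.mem_Iio]; omega⟩
  have hdense := hab.diff_finite hFfin
  obtain ⟨v, ⟨hvS, hvF⟩, hvb⟩ := hdense.exists_mem_open Metric.isOpen_ball
    ⟨t, Metric.mem_ball_self hε⟩
  obtain ⟨k, l, _, _, hv⟩ := hvS
  refine ⟨k, l, ?_, ?_⟩
  · by_contra h
    exact hvF ⟨(k, l), by simp only [Set.mem_setOf_eq]; omega, hv⟩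
  · rw [hv, ← dist_eq_norm]
    exact Metric.mem_ball.mp hvb

/-- Density of the products forces `a ≠ 0` and `b ≠ 0`. -/
private lemma baseNeZero (a b : ℂ)
    (hab : Dense {w : ℂ | ∃ k l : ℕ, 0 < k ∧ 0 < l ∧ a ^ k * b ^ l = w}) :
    a ≠ 0 ∧ b ≠ 0 := by
  obtain ⟨v, hvS, hvb⟩ := hab.exists_mem_open (Metric.isOpen_ball (x := (2:ℂ)) (ε := 1))
    ⟨2, Metric.mem_ball_self one_pos⟩
  obtain ⟨k, l, hk, hl, hv⟩ := hvS
  have hv0 : v ≠ 0 := by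
    intro h
    rw [h, Metric.mem_ball, dist_comm, Complex.dist_eq] at hvb
    simp at hvb
  rw [← hv] at hv0
  have ha : a ≠ 0 := fun h => hv0 (by rw [h, zero_pow hk.ne', zero_mul])
  have hb : b ≠ 0 := fun h => hv0 (by rw [h, zero_pow hl.ne', mul_zero])
  exact ⟨ha, hb⟩

/-- The coordinatewise formula for the action of `(diagonal d)^k (diagonal e)^l`. -/
private lemma mulVec_coord {n : ℕ} (d e : Fin n → ℂ) (k l : ℕ) (u : Fin n → ℂ) (j : Fin n) :
    (Matrix.diagonal d ^ k * Matrix.diagonal e ^ l).mulVec u j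
      = d j ^ k * e j ^ l * u j := by
  simp [Matrix.diagonal_pow, Matrix.diagonal_mul_diagonal, Matrix.mulVec_diagonal,
    Pi.mul_apply, Pi.pow_apply]

/-- Key membership criterion for the `J`-set of a diagonal pair at a vector supported
on the first coordinate. -/
private lemma mem_of_coords {n : ℕ} (hn : 0 < n) (d e : Fin n → ℂ)
    (hd : ∀ j : Fin n, j ≠ ⟨0, hn⟩ → 1 < ‖d j‖)
    (he : ∀ j : Fin n, j ≠ ⟨0, hn⟩ → 1 < ‖e j‖)
    (z w : Fin n → ℂ) (hz : ∀ j : Fin n, j ≠ ⟨0, hn⟩ → z j = 0)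
    (k l : ℕ → ℕ) (hkl : Tendsto (fun m => k m + l m) atTop atTop)
    (U : ℕ → ℂ) (hU : Tendsto U atTop (𝓝 (z ⟨0, hn⟩)))
    (hImg : Tendsto (fun m => d ⟨0, hn⟩ ^ k m * e ⟨0, hn⟩ ^ l m * U m) atTop
      (𝓝 (w ⟨0, hn⟩))) :
    w ∈ JSetPair (Matrix.diagonal d) (Matrix.diagonal e) z := by
  classical
  refine ⟨fun m j => if j = ⟨0, hn⟩ then U m else w j / (d j ^ k m * e j ^ l m),
    k, l, ?_, hkl, ?_⟩
  · rw [tendsto_pi_nhds]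
    intro j
    by_cases hj : j = ⟨0, hn⟩
    · subst hj
      simpa using hU
    · simp only [if_neg hj, hz j hj]
      have hdj : 1 < ‖d j‖ := by exact hd j hj
      have hej : 1 < ‖e j‖ := by exact he j hj
      set μ : ℝ := min ‖d j‖ ‖e j‖ with hμdef
      have hμ : 1 < μ := lt_min hdj hej
      have hμ0 : (0:ℝ) ≤ μ := le_trans zero_le_one hμ.le
      have hbound : ∀ m, ‖w j / (d j ^ k m * e j ^ l m)‖ ≤ ‖w j‖ / μ ^ (k m + l m) := by
        intro m
        rw [norm_div]
        have hD : μ ^ (k m + l m) ≤ ‖d j ^ k m * e j ^ l m‖ := by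
          rw [norm_mul, norm_pow, norm_pow, pow_add]
          exact mul_le_mul (pow_le_pow_left₀ hμ0 (min_le_left _ _) _)
            (pow_le_pow_left₀ hμ0 (min_le_right _ _) _) (by positivity) (by positivity)
        gcongr
      have hto : Tendsto (fun m => ‖w j‖ / μ ^ (k m + l m)) atTop (𝓝 0) :=
        Tendsto.div_atTop tendsto_const_nhds
          ((tendsto_pow_atTop_atTop_of_one_lt hμ).comp hkl)
      exact squeeze_zero_norm hbound hto
  · rw [tendsto_pi_nhds]
    intro j
    simp only [mulVec_coord]
    by_cases hj : j = ⟨0, hn⟩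
    · subst hj
      simpa using hImg
    · simp only [if_neg hj]
      have hdj : d j ≠ 0 := by
        intro h
        have := hd j hj
        rw [h, norm_zero] at this
        linarith
      have hej : e j ≠ 0 := by
        intro h
        have := he j hj
        rw [h, norm_zero] at this
        linarith
      have heq : ∀ m, d j ^ k m * e j ^ l m * (w j / (d j ^ k m * e j ^ l m)) = w j := by
        intro m
        rw [mul_comm, div_mul_cancel₀]
        exact mul_ne_zero (pow_ne_zero _ hdj) (pow_ne_zero _ hej)
      simp only [heq]
      exact tendsto_const_nhds

/-- If `z` is supported on the first coordinate, `J_{(A,B)}(z) = ℂⁿ`. -/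
private lemma J_univ {n : ℕ} (hn : 0 < n) (a b : ℂ)
    (hab : Dense {w : ℂ | ∃ k l : ℕ, 0 < k ∧ 0 < l ∧ a ^ k * b ^ l = w})
    (d e : Fin n → ℂ) (hd0 : d ⟨0, hn⟩ = a) (he0 : e ⟨0, hn⟩ = b)
    (hd : ∀ j : Fin n, j ≠ ⟨0, hn⟩ → 1 < ‖d j‖)
    (he : ∀ j : Fin n, j ≠ ⟨0, hn⟩ → 1 < ‖e j‖)
    (z : Fin n → ℂ) (hz : ∀ j : Fin n, j ≠ ⟨0, hn⟩ → z j = 0) :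
    JSetPair (Matrix.diagonal d) (Matrix.diagonal e) z = Set.univ := by
  obtain ⟨ha, hb⟩ := baseNeZero a b hab
  apply Set.eq_univ_of_forall
  intro w
  by_cases hz0 : z ⟨0, hn⟩ = 0
  · -- products escape to infinity; perturb 0 by w₀ / (a^k b^l)
    have hch : ∀ m : ℕ, ∃ k l : ℕ, m ≤ k + l ∧ ‖a ^ k * b ^ l - ((m:ℂ)+1)‖ < 1 :=
      fun m => tailDense a b hab m ((m:ℂ)+1) one_pos
    choose k l hklge hc using hch
    have hkl : Tendsto (fun m => k m + l m) atTop atTop :=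
      tendsto_atTop_mono hklge tendsto_id
    have hcne : ∀ m, a ^ k m * b ^ l m ≠ 0 :=
      fun m => mul_ne_zero (pow_ne_zero _ ha) (pow_ne_zero _ hb)
    have hclb : ∀ m : ℕ, (m : ℝ) ≤ ‖a ^ k m * b ^ l m‖ := by
      intro m
      have h1 := hc m
      have h2 : ‖((m:ℂ)+1)‖ - ‖a ^ k m * b ^ l m‖ ≤ ‖a ^ k m * b ^ l m - ((m:ℂ)+1)‖ := by
        rw [norm_sub_rev]
        exact norm_sub_norm_le _ _
      have h3 : ‖((m:ℂ)+1)‖ = (m:ℝ) + 1 := by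
        rw [show ((m:ℂ)+1) = ((m+1 : ℕ):ℂ) by push_cast; ring, Complex.norm_natCast]
        push_cast; ring
      linarith
    set U : ℕ → ℂ := fun m => w ⟨0, hn⟩ / (a ^ k m * b ^ l m) with hUdef
    have hU : Tendsto U atTop (𝓝 (z ⟨0, hn⟩)) := by
      rw [hz0]
      have hb1 : ∀ᶠ m in atTop, ‖U m‖ ≤ ‖w ⟨0, hn⟩‖ / (m:ℝ) := by
        filter_upwards [eventually_ge_atTop 1] with m hm
        rw [hUdef, norm_div]
        have hmpos : (0:ℝ) < (m:ℝ) := by exact_mod_cast hm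
        gcongr
        · exact hclb m
      have hb2 : Tendsto (fun m : ℕ => ‖w ⟨0, hn⟩‖ / (m:ℝ)) atTop (𝓝 0) :=
        Tendsto.div_atTop tendsto_const_nhds tendsto_natCast_atTop_atTop
      exact squeeze_zero_norm' hb1 hb2
    have hImg : Tendsto (fun m => d ⟨0, hn⟩ ^ k m * e ⟨0, hn⟩ ^ l m * U m) atTop
        (𝓝 (w ⟨0, hn⟩)) := by
      simp only [hd0, he0, hUdef]
      have heq : ∀ m, a ^ k m * b ^ l m * (w ⟨0, hn⟩ / (a ^ k m * b ^ l m)) = w ⟨0, hn⟩ := by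
        intro m
        rw [mul_comm, div_mul_cancel₀ _ (hcne m)]
      simp only [heq]
      exact tendsto_const_nhds
    exact mem_of_coords hn d e hd he z w hz k l hkl U hU hImg
  · -- products approach w₀ / z₀
    set t : ℂ := w ⟨0, hn⟩ / z ⟨0, hn⟩ with htdef
    have hch : ∀ m : ℕ, ∃ k l : ℕ, m ≤ k + l ∧ ‖a ^ k * b ^ l - t‖ < 1/((m:ℝ)+1) :=
      fun m => tailDense a b hab m t (by positivity)
    choose k l hklge hc using hch
    have hkl : Tendsto (fun m => k m + l m) atTop atTop :=
      tendsto_atTop_mono hklge tendsto_id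
    have hct : Tendsto (fun m => a ^ k m * b ^ l m) atTop (𝓝 t) := by
      rw [tendsto_iff_norm_sub_tendsto_zero]
      exact squeeze_zero (fun m => norm_nonneg _) (fun m => (hc m).le)
        tendsto_one_div_add_atTop_nhds_zero_nat
    have hImg : Tendsto (fun m => a ^ k m * b ^ l m * z ⟨0, hn⟩) atTop
        (𝓝 (w ⟨0, hn⟩)) := by
      have h := hct.mul_const (z ⟨0, hn⟩)
      rwa [htdef, div_mul_cancel₀ _ hz0] at h
    exact mem_of_coords hn d e hd he z w hz k l hkl (fun _ => z ⟨0, hn⟩)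
      tendsto_const_nhds (by simpa [hd0, he0] using hImg)

/-- If `z j ≠ 0` for some `j ≠ 0`, then `0 ∉ J_{(A,B)}(z)`. -/
private lemma zero_not_mem {n : ℕ} (hn : 0 < n) (d e : Fin n → ℂ)
    (hd : ∀ j : Fin n, j ≠ ⟨0, hn⟩ → 1 < ‖d j‖)
    (he : ∀ j : Fin n, j ≠ ⟨0, hn⟩ → 1 < ‖e j‖)
    (z : Fin n → ℂ) (j : Fin n) (hj : j ≠ ⟨0, hn⟩) (hzj : z j ≠ 0) :
    (0 : Fin n → ℂ) ∉ JSetPair (Matrix.diagonal d) (Matrix.diagonal e) z := by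
  rintro ⟨u, k, l, hu, hkl, himg⟩
  have hdj : 1 < ‖d j‖ := by exact hd j hj
  have hej : 1 < ‖e j‖ := by exact he j hj
  set μ : ℝ := min ‖d j‖ ‖e j‖ with hμdef
  have hμ : 1 < μ := lt_min hdj hej
  have hμ0 : (0:ℝ) ≤ μ := le_trans zero_le_one hμ.le
  have h1 : Tendsto (fun m => ‖d j ^ k m * e j ^ l m * u m j‖) atTop (𝓝 0) := by
    have h := tendsto_pi_nhds.mp himg j
    simp only [mulVec_coord] at h
    simpa using h.norm
  have h2 : Tendsto (fun m => ‖u m j‖) atTop (𝓝 ‖z j‖) :=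
    (tendsto_pi_nhds.mp hu j).norm
  have hzpos : (0:ℝ) < ‖z j‖ := norm_pos_iff.mpr hzj
  have hev : ∀ᶠ m in atTop, ‖z j‖ / 2 ≤ ‖u m j‖ :=
    h2.eventually_const_le (by linarith)
  have hlow : Tendsto (fun m => ‖d j ^ k m * e j ^ l m * u m j‖) atTop atTop := by
    apply tendsto_atTop_mono' atTop ?_
      (Tendsto.atTop_mul_const (r := ‖z j‖ / 2) (by positivity)
        ((tendsto_pow_atTop_atTop_of_one_lt hμ).comp hkl))
    filter_upwards [hev] with m hm
    simp only [Function.comp]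
    rw [norm_mul, norm_mul, norm_pow, norm_pow, pow_add]
    have h3 : μ ^ k m ≤ ‖d j‖ ^ k m := pow_le_pow_left₀ hμ0 (min_le_left _ _) _
    have h4 : μ ^ l m ≤ ‖e j‖ ^ l m := pow_le_pow_left₀ hμ0 (min_le_right _ _) _
    exact mul_le_mul (mul_le_mul h3 h4 (by positivity) (by positivity)) hm
      (by positivity) (by positivity)
  exact not_tendsto_atTop_of_tendsto_nhds h1 hlow

/-- Let `a, b ∈ ℂ` with `{a^k b^l : k, l ∈ ℕ}` dense in `ℂ`, and let `A, B` be diagonal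
`n × n` complex matrices (`n ≥ 2`) with `A₁₁ = a`, `B₁₁ = b` and all other diagonal entries
of modulus `> 1`. Then `{z : J_{(A,B)}(z) = ℂⁿ} = {(z₁,0,…,0)ᵗ}`, so `(A,B)` is a locally
hypercyclic pair; moreover `(A,B)` is not hypercyclic. -/
theorem complex_diagonal_pair_locally_hypercyclic_not_hypercyclic
    (a b : ℂ)
    (hab : Dense {w : ℂ | ∃ k l : ℕ, 0 < k ∧ 0 < l ∧ a ^ k * b ^ l = w})
    (n : ℕ) (hn : 2 ≤ n) (d e : Fin n → ℂ)
    (hd0 : d ⟨0, by omega⟩ = a) (he0 : e ⟨0, by omega⟩ = b)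
    (hd : ∀ j : Fin n, j ≠ ⟨0, by omega⟩ → 1 < ‖d j‖)
    (he : ∀ j : Fin n, j ≠ ⟨0, by omega⟩ → 1 < ‖e j‖) :
    ({z : Fin n → ℂ | JSetPair (Matrix.diagonal d) (Matrix.diagonal e) z = Set.univ}
        = {z : Fin n → ℂ | ∀ j : Fin n, j ≠ ⟨0, by omega⟩ → z j = 0}) ∧
    (∃ z : Fin n → ℂ, z ≠ 0 ∧
        JSetPair (Matrix.diagonal d) (Matrix.diagonal e) z = Set.univ) ∧
    ¬ ∃ w : Fin n → ℂ, Dense {v : Fin n → ℂ | ∃ k l : ℕ,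
        (Matrix.diagonal d ^ k * Matrix.diagonal e ^ l).mulVec w = v} := by
  classical
  have hn0 : 0 < n := by omega
  refine ⟨?_, ?_, ?_⟩
  · ext z
    simp only [Set.mem_setOf_eq]
    constructor
    · intro hJ j hj
      by_contra hzj
      exact zero_not_mem hn0 d e hd he z j hj hzj (hJ ▸ Set.mem_univ _)
    · intro hz
      exact J_univ hn0 a b hab d e hd0 he0 hd he z hz
  · refine ⟨fun j => if j = ⟨0, hn0⟩ then 1 else 0, ?_, ?_⟩
    · intro h
      have := congrFun h ⟨0, hn0⟩
      simp at this
    · exact J_univ hn0 a b hab d e hd0 he0 hd he _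
        (fun j hj => by simp [if_neg hj])
  · rintro ⟨w, hw⟩
    have hj1lt : 1 < n := by omega
    set j1 : Fin n := ⟨1, hj1lt⟩ with hj1def
    have hj1 : j1 ≠ ⟨0, hn0⟩ := by
      simp [hj1def, Fin.ext_iff]
    have hd1 : 1 < ‖d j1‖ := by exact hd j1 hj1
    have he1 : 1 < ‖e j1‖ := by exact he j1 hj1
    by_cases hwj : w j1 = 0
    · set v : Fin n → ℂ := fun j => if j = j1 then 1 else 0 with hvdef
      obtain ⟨p, hpS, hpd⟩ := Metric.mem_closure_iff.mp (hw v) (1/2) (by norm_num)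
      obtain ⟨k, l, hp⟩ := hpS
      have hpj1 : p j1 = 0 := by
        rw [← hp, mulVec_coord, hwj, mul_zero]
      have hled := dist_le_pi_dist v p j1
      rw [hpj1] at hled
      have hvj1 : v j1 = 1 := by simp [hvdef]
      rw [hvj1] at hled
      have : dist (1:ℂ) 0 = 1 := by simp
      rw [this] at hled
      linarith
    · obtain ⟨p, hpS, hpd⟩ := Metric.mem_closure_iff.mp (hw 0) (‖w j1‖/2)
        (half_pos (norm_pos_iff.mpr hwj))
      obtain ⟨k, l, hp⟩ := hpS
      have hpj1 : p j1 = d j1 ^ k * e j1 ^ l * w j1 := by rw [← hp, mulVec_coord]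
      have hled := dist_le_pi_dist (0 : Fin n → ℂ) p j1
      have hled2 : ‖w j1‖ ≤ dist ((0 : Fin n → ℂ) j1) (p j1) := by
        rw [Pi.zero_apply, dist_zero_left, hpj1, norm_mul, norm_mul, norm_pow, norm_pow]
        have h3 : 1 ≤ ‖d j1‖ ^ k := one_le_pow₀ hd1.le
        have h4 : 1 ≤ ‖e j1‖ ^ l := one_le_pow₀ he1.le
        have h5 : (1:ℝ) ≤ ‖d j1‖ ^ k * ‖e j1‖ ^ l := by nlinarith
        exact le_mul_of_one_le_left (norm_nonneg _) h5
      linarith [norm_nonneg (w j1)]
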